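/- For every Boolean function f : {0,1}^n × {0,1}^n → {0,1}, the deterministic one-way communication complexity D¹(f) satisfies D¹(f) ≤ (s+1) · ⌈log₂(s+1)⌉, where s = GH(f): any garden-hose game of size s computing f yields a one-way protocol in which Alice sends an encoding of her connections E_A(x), from which Bob computes f(x,y). -/

import Mathlib

/-- A partial matching on the vertex type `V`, encoded by a partner function:
`m i = some j` means that there is an edge between `i` and `j`;
the graph `{ {i,j} | m i = some j }` then has maximum degree at most `1`
and no self-loops. -/
def IsPartialMatching {V : Type*} (m : V → Option V) : Prop :=
  ∀ i j, m i = some j → i ≠ j ∧ m j = some i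

/-- The position of the water in a garden-hose game with `s` pipes:
`atAlice i` (resp. `atBob i`) means the water has just arrived at Alice's
(resp. Bob's) end of pipe `i`; `exitA` / `exitB` mean the water has exited
on Alice's / Bob's side, i.e. the maximal path starting at the tap has ended
in `A∘` / in `B`. -/
inductive GHState (s : ℕ) where
  | atAlice : Fin s → GHState s
  | atBob : Fin s → GHState s
  | exitA : GHState s
  | exitB : GHState s
  deriving DecidableEq

/-- Vertex `k` of `A∘ = {0, 1, ..., s}` viewed as a pipe: vertex `0` is the water
tap (no pipe), and vertex `i + 1` is Alice's end of pipe `i`. -/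
def toPipe {s : ℕ} (k : Fin (s + 1)) : Option (Fin s) :=
  if h : (k : ℕ) = 0 then none
  else some ⟨(k : ℕ) - 1, by have := k.isLt; omega⟩

/-- One step of the water flow, given Alice's connections `a` on `A∘ = {0,...,s}`
and Bob's connections `b` on `B = {1,...,s}` (indexed by pipes `Fin s`). -/
def ghStep {s : ℕ} (a : Fin (s + 1) → Option (Fin (s + 1)))
    (b : Fin s → Option (Fin s)) : GHState s → GHState s
  | GHState.atAlice i =>
    match a i.succ with
    | none => GHState.exitA
    | some k =>
      match toPipe k with
      | none => GHState.exitA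
      | some p => GHState.atBob p
  | GHState.atBob i =>
    match b i with
    | none => GHState.exitB
    | some j => GHState.atAlice j
  | GHState.exitA => GHState.exitA
  | GHState.exitB => GHState.exitB

/-- The start of the water flow: the tap (vertex `0` of `A∘`) is connected by
Alice to at most one pipe. -/
def ghStart {s : ℕ} (a : Fin (s + 1) → Option (Fin (s + 1))) : GHState s :=
  match a 0 with
  | none => GHState.exitA
  | some k =>
    match toPipe k with
    | none => GHState.exitA
    | some p => GHState.atBob p

/-- The endpoint of the maximal path `π(x,y)` starting at the tap: since the graph
has maximum degree `2` and the path is simple, it is reached after at most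
`2s + 2` steps. -/
def ghResult {s : ℕ} (a : Fin (s + 1) → Option (Fin (s + 1)))
    (b : Fin s → Option (Fin s)) : GHState s :=
  (ghStep a b)^[2 * s + 2] (ghStart a)

/-- A garden-hose game of size `s` on inputs `{0,1}^n × {0,1}^n`: for every input
`x` Alice chooses a partial matching `EA x` on `A∘ = {0,1,…,s}` and for every
input `y` Bob chooses a partial matching `EB y` on `B = {1,…,s}`. -/
structure GHGame (n s : ℕ) where
  EA : (Fin n → Bool) → Fin (s + 1) → Option (Fin (s + 1))
  EB : (Fin n → Bool) → Fin s → Option (Fin s)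
  matchA : ∀ x, IsPartialMatching (EA x)
  matchB : ∀ y, IsPartialMatching (EB y)

/-- Where the water exits on input `(x, y)`. -/
def GHGame.run {n s : ℕ} (G : GHGame n s) (x y : Fin n → Bool) : GHState s :=
  ghResult (G.EA x) (G.EB y)

/-- The game `G` computes `f` if for all inputs the maximal path from the tap ends
in `A∘` whenever `f x y = 0` (water exits on Alice's side) and in `B` whenever
`f x y = 1` (water exits on Bob's side). -/
def GHGame.Computes {n s : ℕ} (G : GHGame n s)
    (f : (Fin n → Bool) → (Fin n → Bool) → Bool) : Prop :=
  ∀ x y, G.run x y = if f x y then GHState.exitB else GHState.exitA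

/-- The garden-hose complexity of `f`: the minimal number of pipes of a
garden-hose game computing `f`. -/
noncomputable def GH {n : ℕ} (f : (Fin n → Bool) → (Fin n → Bool) → Bool) : ℕ :=
  sInf {s : ℕ | ∃ G : GHGame n s, G.Computes f}

/-- The deterministic one-way communication complexity of `f`: the minimal `m`
such that there are functions `a : {0,1}^n → {0,1}^m` (Alice's message) and
`g : {0,1}^m × {0,1}^n → {0,1}` (Bob's output) with `g (a x) y = f x y` for
all inputs. -/
noncomputable def oneWayCC {n : ℕ}
    (f : (Fin n → Bool) → (Fin n → Bool) → Bool) : ℕ :=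
  sInf {m : ℕ | ∃ (a : (Fin n → Bool) → Fin m → Bool)
    (g : (Fin m → Bool) → (Fin n → Bool) → Bool), ∀ x y, g (a x) y = f x y}

/-!
Alice's whole contribution to the game is her matching `E_A(x)` on the `s + 1` vertices of `A∘`,
and together with `y` it determines where the water exits, hence `f(x, y)`. Writing an unmatched
vertex as its own partner turns the matching into a function `A∘ → A∘`, of which there are
`(s + 1)^(s + 1) ≤ 2^((s + 1)⌈log₂(s + 1)⌉)`; so Alice can send it in that many bits. That `GH f`
is attained at all needs some game computing `f`: Alice connects the tap to the pipe indexed by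
`x`, and Bob joins that pipe to a spare one, whose Alice end is open, exactly when `f(x, y) = 0`.
-/

open Function

def involutionMatching {V : Type*} (σ : V → V) (P : V → Prop) [DecidablePred P] :
    V → Option V :=
  fun v => if P v then some (σ v) else none

theorem isPartialMatching_involutionMatching {V : Type*} {σ : V → V} (hσ : Involutive σ)
    {P : V → Prop} [DecidablePred P] (hP : ∀ v, P v → P (σ v)) (hfix : ∀ v, P v → σ v ≠ v) :
    IsPartialMatching (involutionMatching σ P) := by
  intro i j h
  unfold involutionMatching at h ⊢
  split_ifs at h with hi
  obtain rfl := Option.some.inj h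
  exact ⟨(hfix i hi).symm, by simp [hP i hi, hσ i]⟩

theorem IsPartialMatching.eq_of_getD_eq {V : Type*} {m m' : V → Option V}
    (hm : IsPartialMatching m) (hm' : IsPartialMatching m')
    (h : ∀ i, (m i).getD i = (m' i).getD i) : m = m' := by
  funext i
  have hi := h i
  cases hmi : m i <;> cases hmi' : m' i <;>
    simp only [hmi, hmi', Option.getD_none, Option.getD_some] at hi
  · rfl
  · exact absurd hi (hm' i _ hmi').1
  · exact absurd hi.symm (hm i _ hmi).1
  · rw [hi]

theorem toPipe_succ {s : ℕ} (i : Fin s) : toPipe i.succ = some i := by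
  simp [toPipe]

theorem ghResult_eq_of_iterate_eq {s : ℕ} {a : Fin (s + 1) → Option (Fin (s + 1))}
    {b : Fin s → Option (Fin s)} {k : ℕ} {e : GHState s} (hk : k ≤ 2 * s + 2)
    (he : e = GHState.exitA ∨ e = GHState.exitB) (h : (ghStep a b)^[k] (ghStart a) = e) :
    ghResult a b = e := by
  have hfix : ghStep a b e = e := by rcases he with rfl | rfl <;> rfl
  rw [ghResult, ← Nat.sub_add_cancel hk, iterate_add_apply, h, iterate_fixed hfix]

def swapHalves (N : ℕ) : Equiv.Perm (Fin (N + N)) :=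
  finSumFinEquiv.permCongr (Equiv.sumComm (Fin N) (Fin N))

theorem swapHalves_involutive (N : ℕ) : Involutive (swapHalves N) := by
  intro k; simp [swapHalves, Equiv.permCongr_apply]

def foldHalves {N : ℕ} (k : Fin (N + N)) : Fin N :=
  Sum.elim id id (finSumFinEquiv.symm k)

theorem foldHalves_castAdd {N : ℕ} (i : Fin N) : foldHalves (Fin.castAdd N i) = i := by
  simp [foldHalves]

theorem swapHalves_castAdd {N : ℕ} (i : Fin N) :
    swapHalves N (Fin.castAdd N i) = Fin.natAdd N i := by
  simp [swapHalves, Equiv.permCongr_apply]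

theorem foldHalves_swapHalves {N : ℕ} (k : Fin (N + N)) :
    foldHalves (swapHalves N k) = foldHalves k := by
  rw [swapHalves, Equiv.permCongr_apply, foldHalves, foldHalves, Equiv.symm_apply_apply]
  cases finSumFinEquiv.symm k <;> rfl

theorem swapHalves_ne_self {N : ℕ} (k : Fin (N + N)) : swapHalves N k ≠ k := by
  rw [swapHalves, Equiv.permCongr_apply, Ne, ← Equiv.eq_symm_apply]
  cases finSumFinEquiv.symm k <;> simp

section GHStep

variable {s : ℕ} {a : Fin (s + 1) → Option (Fin (s + 1))} {b : Fin s → Option (Fin s)}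

theorem ghStart_of_eq_some_succ {i : Fin s} (h : a 0 = some i.succ) :
    ghStart a = GHState.atBob i := by
  simp [ghStart, h, toPipe_succ]

theorem ghStep_atBob_of_eq_none {i : Fin s} (h : b i = none) :
    ghStep a b (GHState.atBob i) = GHState.exitB := by
  simp [ghStep, h]

theorem ghStep_atBob_of_eq_some {i j : Fin s} (h : b i = some j) :
    ghStep a b (GHState.atBob i) = GHState.atAlice j := by
  simp [ghStep, h]

theorem ghStep_atAlice_of_eq_none {i : Fin s} (h : a i.succ = none) :
    ghStep a b (GHState.atAlice i) = GHState.exitA := by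
  simp [ghStep, h]

end GHStep

noncomputable def inputIndex (n : ℕ) : (Fin n → Bool) ≃ Fin (Fintype.card (Fin n → Bool)) :=
  Fintype.equivFin _

section UniversalGame

variable {n : ℕ}

noncomputable def tapPipe (x : Fin n → Bool) :
    Fin (Fintype.card (Fin n → Bool) + Fintype.card (Fin n → Bool)) :=
  Fin.castAdd _ (inputIndex n x)

noncomputable def universalGame (f : (Fin n → Bool) → (Fin n → Bool) → Bool) :
    GHGame n (Fintype.card (Fin n → Bool) + Fintype.card (Fin n → Bool)) where
  EA x := involutionMatching (Equiv.swap 0 (tapPipe x).succ) fun k => k = 0 ∨ k = (tapPipe x).succ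
  EB y := involutionMatching (swapHalves _) fun k =>
    f ((inputIndex n).symm (foldHalves k)) y = false
  matchA x := isPartialMatching_involutionMatching (Equiv.swap_apply_self _ _)
    (by rintro k (rfl | rfl) <;> simp)
    (by rintro k (rfl | rfl) <;> simp [(Fin.succ_ne_zero _).symm, Fin.succ_ne_zero])
  matchB y := isPartialMatching_involutionMatching (swapHalves_involutive _)
    (fun k hk => by rwa [foldHalves_swapHalves]) (fun k _ => swapHalves_ne_self k)

theorem universalGame_computes (f : (Fin n → Bool) → (Fin n → Bool) → Bool) :
    (universalGame f).Computes f := by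
  intro x y
  have hstart : ghStart ((universalGame f).EA x) = GHState.atBob (tapPipe x) :=
    ghStart_of_eq_some_succ (by simp [universalGame, involutionMatching])
  have hfold : (inputIndex n).symm (foldHalves (tapPipe x)) = x := by
    simp [tapPipe, foldHalves_castAdd]
  cases hf : f x y
  · refine ghResult_eq_of_iterate_eq (k := 2) (by omega) (.inl rfl) ?_
    have hB : (universalGame f).EB y (tapPipe x) = some (Fin.natAdd _ (inputIndex n x)) := by
      simp only [universalGame, involutionMatching, hfold, hf, if_true]
      rw [tapPipe, swapHalves_castAdd]
    have hA : (universalGame f).EA x (Fin.natAdd _ (inputIndex n x)).succ = none := by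
      have hne : Fin.natAdd _ (inputIndex n x) ≠ tapPipe x := by
        simp only [tapPipe, Ne, Fin.ext_iff, Fin.val_natAdd, Fin.val_castAdd]
        omega
      simp only [universalGame, involutionMatching, Fin.succ_ne_zero, Fin.succ_inj, hne, or_self,
        if_false]
    rw [iterate_succ_apply', iterate_one, hstart, ghStep_atBob_of_eq_some hB,
      ghStep_atAlice_of_eq_none hA]
    rfl
  · refine ghResult_eq_of_iterate_eq (k := 1) (by omega) (.inr rfl) ?_
    have hB : (universalGame f).EB y (tapPipe x) = none := by
      simp [universalGame, involutionMatching, hfold, hf]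
    rw [iterate_one, hstart, ghStep_atBob_of_eq_none hB]
    rfl

end UniversalGame

theorem oneWayCC_le_of_factorsThrough {n m : ℕ} {f : (Fin n → Bool) → (Fin n → Bool) → Bool}
    {T : Type*} [Fintype T] (φ : (Fin n → Bool) → T) (hf : f.FactorsThrough φ)
    (hT : Fintype.card T ≤ 2 ^ m) : oneWayCC f ≤ m := by
  obtain ⟨ι⟩ := Function.Embedding.nonempty_of_card_le (β := Fin m → Bool) (by simpa using hT)
  have hfι : f.FactorsThrough (ι ∘ φ) := fun x x' h => hf (ι.injective h)
  apply Nat.sInf_le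
  exact ⟨ι ∘ φ, extend (ι ∘ φ) f fun _ _ => false, fun x y => congrFun (hfι.extend_apply _ x) y⟩

theorem card_fun_fin_le (k : ℕ) : Fintype.card (Fin k → Fin k) ≤ 2 ^ (k * Nat.clog 2 k) := by
  rw [Fintype.card_fun, Fintype.card_fin, mul_comm, pow_mul]
  exact Nat.pow_le_pow_left (Nat.le_pow_clog one_lt_two k) k

theorem GHGame.Computes.factorsThrough {n s : ℕ} {G : GHGame n s}
    {f : (Fin n → Bool) → (Fin n → Bool) → Bool} (hG : G.Computes f) :
    f.FactorsThrough G.EA := by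
  intro x x' h
  funext y
  have hrun : G.run x y = G.run x' y := by rw [GHGame.run, GHGame.run, h]
  rw [hG, hG] at hrun
  revert hrun
  cases f x y <;> cases f x' y <;> simp

theorem exists_ghGame_computes {n : ℕ} (f : (Fin n → Bool) → (Fin n → Bool) → Bool) :
    ∃ G : GHGame n (GH f), G.Computes f :=
  Nat.sInf_mem (s := {s | ∃ G : GHGame n s, G.Computes f}) ⟨_, universalGame f, universalGame_computes f⟩

/-- For every `f`, the deterministic one-way communication complexity satisfies
`D¹(f) ≤ (s + 1) · ⌈log₂ (s + 1)⌉` where `s = GH f`. -/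
theorem oneWayCC_le_gh (n : ℕ)
    (f : (Fin n → Bool) → (Fin n → Bool) → Bool) :
    oneWayCC f ≤ (GH f + 1) * Nat.clog 2 (GH f + 1) := by
  obtain ⟨G, hG⟩ := exists_ghGame_computes f
  refine oneWayCC_le_of_factorsThrough (fun x k => (G.EA x k).getD k) (fun x x' h => ?_)
    (card_fun_fin_le (GH f + 1))
  exact hG.factorsThrough ((G.matchA x).eq_of_getD_eq (G.matchA x') (congrFun h))
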